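/- Let n ≥ 1 and let K ⊆ ℝⁿ be a nonempty compact ball-body. Then the Minkowski difference K − K^c = {x − y : x ∈ K, y ∈ K^c} equals the closed unit ball B(0,1); equivalently, for every unit vector u ∈ ℝⁿ the support functions satisfy h_{K^c}(u) = 1 − h_K(−u). -/

import Mathlib

open Metric Set Pointwise

noncomputable section

/-- The `c`-dual of a set `A ⊆ ℝⁿ`. -/
def cDual {n : ℕ} (A : Set (EuclideanSpace ℝ (Fin n))) : Set (EuclideanSpace ℝ (Fin n)) :=
  {y | ∀ x ∈ A, ‖x - y‖ ≤ 1}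

/-- The support function of a set: `h_K(u) = sup_{x ∈ K} ⟨x, u⟩`. -/
def suppFn {n : ℕ} (K : Set (EuclideanSpace ℝ (Fin n))) (u : EuclideanSpace ℝ (Fin n)) : ℝ :=
  sSup ((fun x => (inner ℝ x u : ℝ)) '' K)

/-! Fix a unit vector `u` and let `y₀` maximise `⟪·, u⟫` on the compact set `K^c`. If some
`y ∈ K^c` were at distance more than `1` from `y₀ - u`, the tangent at `y₀` of the short unit arc
from `y₀` to `y` (in the plane of `y - y₀` and `u`) would point strictly into `⟪·, u⟫ > ⟪y₀, u⟫`.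
Every point of that arc is within distance `1` of the whole lens `B(y₀, 1) ∩ B(y, 1) ⊇ K`, so a
point of the arc near `y₀` lies in `K^c` and beats `y₀`. Hence `y₀ - u ∈ (K^c)^c = K`, which gives
`h_{K^c}(u) = ⟪y₀, u⟫` and `h_K(-u) = 1 - ⟪y₀, u⟫`, and puts every unit vector into the convex
set `K - K^c`, which therefore contains the unit ball. -/

local notation "⟪" x ", " y "⟫" => @inner ℝ _ _ x y

section Lens

/- Planar picture: the lens of the unit discs centred at `(0, 0)` and `(r, 0)`, the unit arc
through both centres with its own centre at `(r / 2, -h)`, and the point `(δ, Y)` of that arc.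
Every lens point `(α, ±s)` has `s ≤ h`, which keeps it within distance `1` of `(δ, Y)`. -/
lemma arc_lens_sq_le {r h δ Y α s : ℝ} (hδ : 0 ≤ δ) (hδr : δ ≤ r) (hh : 0 ≤ h)
    (hhr : h ^ 2 = 1 - r ^ 2 / 4) (hY : 0 ≤ Y) (hYδ : Y ^ 2 + 2 * Y * h = δ * (r - δ))
    (h₀ : α ^ 2 + s ^ 2 ≤ 1) (h₁ : (α - r) ^ 2 + s ^ 2 ≤ 1) :
    (δ - α) ^ 2 + (Y + s) ^ 2 ≤ 1 := by
  have hsh : s ≤ h := by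
    rcases le_total α (r / 2) with hα | hα <;> nlinarith
  have hexpand : (δ - α) ^ 2 + (Y + s) ^ 2 = δ * (r - 2 * α) + α ^ 2 + s ^ 2 + 2 * Y * (s - h) := by
    linear_combination hYδ
  have hYsh : 2 * Y * (s - h) ≤ 0 := by nlinarith
  rcases le_total α (r / 2) with hα | hα
  · nlinarith [mul_le_mul_of_nonneg_right hδr (by linarith : 0 ≤ r - 2 * α)]
  · nlinarith [mul_nonneg hδ (by linarith : 0 ≤ 2 * α - r)]

/- `Y ↦ Y (Y + 2h)` is increasing, and `hδε` makes its value at `δ t / (β r)` smaller than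
`δ (r - δ)`. -/
lemma arc_height_gt {r t β h δ Y : ℝ} (hr : 0 < r) (hβ : 0 < β) (ht : 0 ≤ t) (hh : 0 ≤ h)
    (hβr : β ^ 2 * r ^ 2 = r ^ 2 - t ^ 2) (hδ : 0 < δ)
    (hδε : 2 * r * δ = β * (β * r ^ 2 - 2 * h * t))
    (hY : 0 ≤ Y) (hYδ : Y ^ 2 + 2 * Y * h = δ * (r - δ)) :
    δ * t < Y * β * r := by
  by_contra! hle
  have hp : 0 < β * r := mul_pos hβ hr
  have hmono : (Y * β * r) * (Y * β * r + 2 * h * (β * r)) ≤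
      (δ * t) * (δ * t + 2 * h * (β * r)) := by
    have := mul_nonneg hY hp.le
    gcongr
  have hsq : (Y * β * r) * (Y * β * r + 2 * h * (β * r)) = δ * (r - δ) * (β ^ 2 * r ^ 2) := by
    linear_combination (β ^ 2 * r ^ 2) * hYδ
  have : δ * (2 * r ^ 2 * δ) ≤ δ * (δ * r ^ 2) := by
    linear_combination hmono - hsq + δ * r * hδε + δ ^ 2 * hβr
  nlinarith [mul_pos hδ hr]

lemma exists_arc_point_above {r t β : ℝ} (hr : 0 < r) (hr2 : r ≤ 2) (ht : 0 ≤ t)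
    (htr : 2 * t < r ^ 2) (hβ : 0 < β) (hβr : β ^ 2 * r ^ 2 = r ^ 2 - t ^ 2) :
    ∃ h δ Y : ℝ, 0 ≤ h ∧ h ^ 2 = 1 - r ^ 2 / 4 ∧ 0 ≤ δ ∧ δ ≤ r ∧ 0 ≤ Y ∧
      Y ^ 2 + 2 * Y * h = δ * (r - δ) ∧ δ * t < Y * β * r := by
  set h := √(1 - r ^ 2 / 4)
  have hh0 : 0 ≤ h := Real.sqrt_nonneg _
  have hh : h ^ 2 = 1 - r ^ 2 / 4 := Real.sq_sqrt (by nlinarith)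
  -- the arc's tangent at the origin, of slope `r / (2h)`, is steeper than slope `t / (β r)`
  have hgain : 2 * h * t < β * r ^ 2 :=
    lt_of_pow_lt_pow_left₀ 2 (by positivity)
      (by nlinarith [mul_pos (by linarith : 0 < r ^ 2 - 2 * t) (by nlinarith : 0 < r ^ 2 + 2 * t)])
  set δ := β * (β * r ^ 2 - 2 * h * t) / (2 * r)
  have hδ : 0 < δ := by have := sub_pos.mpr hgain; positivity
  have hδε : 2 * r * δ = β * (β * r ^ 2 - 2 * h * t) := mul_div_cancel₀ _ (by positivity)
  have hδr : δ ≤ r := by nlinarith [mul_nonneg hβ.le (mul_nonneg hh0 ht)]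
  set Y := √(h ^ 2 + δ * (r - δ)) - h
  have hY : 0 ≤ Y := sub_nonneg.mpr (Real.le_sqrt_of_sq_le (by nlinarith))
  have hYδ : Y ^ 2 + 2 * Y * h = δ * (r - δ) := by
    linear_combination Real.sq_sqrt (by nlinarith : 0 ≤ h ^ 2 + δ * (r - δ))
  exact ⟨h, δ, Y, hh0, hh, hδ.le, hδr, hY, hYδ, arc_height_gt hr hβ ht hh0 hβr hδ hδε hY hYδ⟩

variable {E : Type*} [NormedAddCommGroup E] [InnerProductSpace ℝ E]

lemma inner_sub_inner_smul_eq_zero {e : E} (he : ‖e‖ = 1) (x : E) : ⟪e, x - ⟪e, x⟫ • e⟫ = 0 := by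
  rw [inner_sub_right, real_inner_smul_right, real_inner_self_eq_norm_sq, he, one_pow, mul_one,
    sub_self]

lemma norm_smul_add_sq_of_inner_eq_zero {e x : E} (he : ‖e‖ = 1) (hx : ⟪e, x⟫ = 0) (a : ℝ) :
    ‖a • e + x‖ ^ 2 = a ^ 2 + ‖x‖ ^ 2 := by
  rw [norm_add_sq_real, real_inner_smul_left, hx, norm_smul, he, mul_one, Real.norm_eq_abs, sq_abs]
  ring

lemma lens_subset_closedBall_arc {e f y₀ : E} (he : ‖e‖ = 1) (hf : ‖f‖ = 1) (hef : ⟪e, f⟫ = 0)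
    {r h δ Y : ℝ} (hδ : 0 ≤ δ) (hδr : δ ≤ r) (hh : 0 ≤ h) (hhr : h ^ 2 = 1 - r ^ 2 / 4)
    (hY : 0 ≤ Y) (hYδ : Y ^ 2 + 2 * Y * h = δ * (r - δ)) :
    closedBall y₀ 1 ∩ closedBall (y₀ + r • e) 1 ⊆ closedBall (y₀ + δ • e + Y • f) 1 := by
  rintro c ⟨hc₀, hc₁⟩
  rw [mem_closedBall, dist_eq_norm] at hc₀ hc₁ ⊢
  set α := ⟪e, c - y₀⟫
  set w := c - y₀ - α • e
  have hw : ⟪e, w⟫ = 0 := inner_sub_inner_smul_eq_zero he _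
  have hfw : ⟪e, Y • f - w⟫ = 0 := by
    rw [inner_sub_right, real_inner_smul_right, hef, hw, mul_zero, sub_zero]
  have h₀ : α ^ 2 + ‖w‖ ^ 2 ≤ 1 := by
    rw [← norm_smul_add_sq_of_inner_eq_zero he hw, add_sub_cancel]
    exact pow_le_one₀ (norm_nonneg _) hc₀
  have h₁ : (α - r) ^ 2 + ‖w‖ ^ 2 ≤ 1 := by
    rw [← norm_smul_add_sq_of_inner_eq_zero he hw,
      show (α - r) • e + w = c - (y₀ + r • e) by simp only [w, sub_smul]; abel]
    exact pow_le_one₀ (norm_nonneg _) hc₁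
  have hYw : ‖Y • f - w‖ ≤ Y + ‖w‖ := by
    simpa [norm_smul, hf, abs_of_nonneg hY] using norm_sub_le (Y • f) w
  rw [norm_sub_rev, ← sq_le_one_iff₀ (norm_nonneg _),
    show y₀ + δ • e + Y • f - c = (δ - α) • e + (Y • f - w) by simp only [w, sub_smul]; abel,
    norm_smul_add_sq_of_inner_eq_zero he hfw]
  calc (δ - α) ^ 2 + ‖Y • f - w‖ ^ 2 ≤ (δ - α) ^ 2 + (Y + ‖w‖) ^ 2 := by gcongr
  _ ≤ 1 := arc_lens_sq_le hδ hδr hh hhr hY hYδ h₀ h₁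

lemma exists_unit_orthogonal {e u : E} (he : ‖e‖ = 1) (hu : ‖u‖ = 1) (heu : |⟪e, u⟫| < 1) :
    ∃ f : E, ‖f‖ = 1 ∧ ⟪e, f⟫ = 0 ∧ 0 < ⟪f, u⟫ ∧ ⟪e, u⟫ ^ 2 + ⟪f, u⟫ ^ 2 = 1 := by
  set v := u - ⟪e, u⟫ • e
  have hv : ⟪e, v⟫ = 0 := inner_sub_inner_smul_eq_zero he _
  have hpyth : ⟪e, u⟫ ^ 2 + ‖v‖ ^ 2 = 1 := by
    rw [← norm_smul_add_sq_of_inner_eq_zero he hv, add_sub_cancel, hu, one_pow]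
  have hvpos : 0 < ‖v‖ := by
    nlinarith [abs_nonneg ⟪e, u⟫, sq_abs ⟪e, u⟫, norm_nonneg v]
  have hvu : ⟪v, u⟫ = ‖v‖ ^ 2 := by
    rw [← real_inner_self_eq_norm_sq]
    nth_rewrite 1 [← add_sub_cancel (⟪e, u⟫ • e) u]
    rw [inner_add_right, real_inner_smul_right, real_inner_comm e v, hv, mul_zero, zero_add]
  refine ⟨‖v‖⁻¹ • v, norm_smul_inv_norm (norm_ne_zero_iff.mp hvpos.ne'), ?_, ?_, ?_⟩
  · rw [real_inner_smul_right, hv, mul_zero]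
  · rw [real_inner_smul_left, hvu]; positivity
  · rw [real_inner_smul_left, hvu, pow_two ‖v‖, inv_mul_cancel_left₀ hvpos.ne', hpyth]

lemma exists_inner_lt_of_lens {u y₀ y₁ : E} (hu : ‖u‖ = 1) (hy : ‖y₁ - y₀‖ ≤ 2)
    (hle : ⟪y₁, u⟫ ≤ ⟪y₀, u⟫) (hfar : 1 < ‖y₁ - (y₀ - u)‖) :
    ∃ z, ⟪y₀, u⟫ < ⟪z, u⟫ ∧ closedBall y₀ 1 ∩ closedBall y₁ 1 ⊆ closedBall z 1 := by
  set r := ‖y₁ - y₀‖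
  set t := ⟪y₀ - y₁, u⟫
  have ht : 0 ≤ t := by simp only [t, inner_sub_left]; linarith
  have hneg : ⟪y₁ - y₀, u⟫ = -t := by rw [← inner_neg_left, neg_sub]
  have htr : 2 * t < r ^ 2 := by
    have hsq : ‖y₁ - (y₀ - u)‖ ^ 2 = r ^ 2 - 2 * t + 1 := by
      rw [show y₁ - (y₀ - u) = (y₁ - y₀) + u by abel, norm_add_sq_real, hu, hneg]
      ring
    nlinarith
  have hr : 0 < r := by nlinarith [norm_nonneg (y₁ - y₀)]
  obtain ⟨e, he, hy₁, heu⟩ : ∃ e : E, ‖e‖ = 1 ∧ y₁ = y₀ + r • e ∧ ⟪e, u⟫ = -(t / r) := by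
    refine ⟨r⁻¹ • (y₁ - y₀), norm_smul_inv_norm (norm_pos_iff.mp hr), ?_, ?_⟩
    · rw [smul_smul, mul_inv_cancel₀ hr.ne', one_smul, add_sub_cancel]
    · rw [real_inner_smul_left, hneg]
      ring
  obtain ⟨f, hf, hef, hβ, hpyth⟩ := exists_unit_orthogonal he hu (by
    rw [heu, abs_neg, abs_of_nonneg (by positivity), div_lt_one hr]
    nlinarith)
  have hβr : ⟪f, u⟫ ^ 2 * r ^ 2 = r ^ 2 - t ^ 2 := by
    rw [heu] at hpyth
    field_simp at hpyth
    linarith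
  obtain ⟨h, δ, Y, hh0, hh, hδ, hδr, hY, hYδ, hgain⟩ :=
    exists_arc_point_above hr hy ht htr hβ hβr
  refine ⟨y₀ + δ • e + Y • f, ?_, hy₁ ▸ lens_subset_closedBall_arc he hf hef hδ hδr hh0 hh hY hYδ⟩
  rw [inner_add_left, inner_add_left, real_inner_smul_left, real_inner_smul_left, heu]
  have : δ * t / r < Y * ⟪f, u⟫ := by rw [div_lt_iff₀ hr]; linarith
  linarith [show δ * -(t / r) = -(δ * t / r) by ring]

end Lens

section BallBody

variable {n : ℕ}

lemma mem_cDual_iff_subset_closedBall {A : Set (EuclideanSpace ℝ (Fin n))}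
    {y : EuclideanSpace ℝ (Fin n)} : y ∈ cDual A ↔ A ⊆ closedBall y 1 :=
  forall₂_congr fun x _ => by rw [mem_closedBall, dist_eq_norm]

lemma cDual_eq_biInter (A : Set (EuclideanSpace ℝ (Fin n))) :
    cDual A = ⋂ x ∈ A, closedBall x 1 := by
  ext y
  simp only [cDual, mem_ofPred_eq, mem_iInter, mem_closedBall, dist_eq_norm, norm_sub_rev y]

lemma convex_cDual (A : Set (EuclideanSpace ℝ (Fin n))) : Convex ℝ (cDual A) := by
  rw [cDual_eq_biInter]
  exact convex_iInter₂ fun x _ => convex_closedBall x 1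

lemma isCompact_cDual {A : Set (EuclideanSpace ℝ (Fin n))} (hA : A.Nonempty) :
    IsCompact (cDual A) := by
  obtain ⟨x, hx⟩ := hA
  rw [cDual_eq_biInter]
  exact (isCompact_closedBall x 1).of_isClosed_subset
    (isClosed_biInter fun _ _ => isClosed_closedBall) (biInter_subset_of_mem hx)

lemma cDual_nonempty [Nontrivial (EuclideanSpace ℝ (Fin n))] {K : Set (EuclideanSpace ℝ (Fin n))}
    (hK : IsCompact K) (hbb : K = cDual (cDual K)) : (cDual K).Nonempty := by
  rw [nonempty_iff_ne_empty]
  intro hempty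
  rw [hempty, cDual_eq_biInter, biInter_empty] at hbb
  exact noncompact_univ _ (hbb ▸ hK)

lemma sub_mem_cDual_cDual_of_isMaxOn {A : Set (EuclideanSpace ℝ (Fin n))} (hA : A.Nonempty)
    {u y₀ : EuclideanSpace ℝ (Fin n)} (hu : ‖u‖ = 1) (hy₀ : y₀ ∈ cDual A)
    (hmax : IsMaxOn (fun y => ⟪y, u⟫) (cDual A) y₀) : y₀ - u ∈ cDual (cDual A) := by
  intro y hy
  by_contra! hfar
  obtain ⟨x, hx⟩ := hA
  have hy₀y : ‖y - y₀‖ ≤ 2 := by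
    calc ‖y - y₀‖ = ‖(x - y₀) - (x - y)‖ := by rw [sub_sub_sub_cancel_left]
      _ ≤ ‖x - y₀‖ + ‖x - y‖ := norm_sub_le _ _
      _ ≤ 2 := by linarith [hy₀ x hx, hy x hx]
  obtain ⟨z, hz, hlens⟩ := exists_inner_lt_of_lens hu hy₀y (hmax hy) hfar
  have hzA : z ∈ cDual A := mem_cDual_iff_subset_closedBall.mpr
    ((subset_inter (mem_cDual_iff_subset_closedBall.mp hy₀)
      (mem_cDual_iff_subset_closedBall.mp hy)).trans hlens)
  exact (hmax hzA).not_gt hz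

lemma exists_isMaxOn_inner_sub_mem [Nontrivial (EuclideanSpace ℝ (Fin n))]
    {K : Set (EuclideanSpace ℝ (Fin n))} (hne : K.Nonempty) (hK : IsCompact K)
    (hbb : K = cDual (cDual K)) {u : EuclideanSpace ℝ (Fin n)} (hu : ‖u‖ = 1) :
    ∃ y ∈ cDual K, IsMaxOn (fun y => ⟪y, u⟫) (cDual K) y ∧ y - u ∈ K := by
  obtain ⟨y, hy, hmax⟩ := (isCompact_cDual hne).exists_isMaxOn (cDual_nonempty hK hbb)
    (f := fun y => ⟪y, u⟫) (by fun_prop)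
  exact ⟨y, hy, hmax, hbb ▸ sub_mem_cDual_cDual_of_isMaxOn hne hu hy hmax⟩

lemma sub_cDual_eq_closedBall [Nontrivial (EuclideanSpace ℝ (Fin n))]
    {K : Set (EuclideanSpace ℝ (Fin n))} (hne : K.Nonempty) (hK : IsCompact K)
    (hbb : K = cDual (cDual K)) : K - cDual K = closedBall 0 1 := by
  refine Subset.antisymm ?_ ?_
  · rintro _ ⟨x, hx, y, hy, rfl⟩
    simpa using hy x hx
  · have hsphere : sphere (0 : EuclideanSpace ℝ (Fin n)) 1 ⊆ K - cDual K := by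
      intro w hw
      obtain ⟨y, hy, -, hyK⟩ := exists_isMaxOn_inner_sub_mem hne hK hbb
        (u := -w) (by simpa using hw)
      exact ⟨y - -w, hyK, y, hy, by simp⟩
    have hconv : Convex ℝ (K - cDual K) := (hbb ▸ convex_cDual _).sub (convex_cDual K)
    rw [← convexHull_sphere_eq_closedBall 0 zero_le_one]
    exact convexHull_min hsphere hconv

lemma suppFn_eq_of_isMaxOn {K : Set (EuclideanSpace ℝ (Fin n))} {u x : EuclideanSpace ℝ (Fin n)}
    (hx : x ∈ K) (hmax : IsMaxOn (fun y => ⟪y, u⟫) K x) : suppFn K u = ⟪x, u⟫ :=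
  IsGreatest.csSup_eq ⟨mem_image_of_mem _ hx, forall_mem_image.mpr (isMaxOn_iff.mp hmax)⟩

lemma suppFn_cDual [Nontrivial (EuclideanSpace ℝ (Fin n))] {K : Set (EuclideanSpace ℝ (Fin n))}
    (hne : K.Nonempty) (hK : IsCompact K) (hbb : K = cDual (cDual K))
    {u : EuclideanSpace ℝ (Fin n)} (hu : ‖u‖ = 1) : suppFn (cDual K) u = 1 - suppFn K (-u) := by
  obtain ⟨y, hy, hmax, hyK⟩ := exists_isMaxOn_inner_sub_mem hne hK hbb hu
  have hyu : ⟪y - u, -u⟫ = 1 - ⟪y, u⟫ := by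
    rw [inner_neg_right, inner_sub_left, real_inner_self_eq_norm_sq, hu]
    ring
  have hmaxK : IsMaxOn (fun x => ⟪x, -u⟫) K (y - u) := by
    intro x hx
    have hyx : ⟪y - x, u⟫ ≤ 1 :=
      calc ⟪y - x, u⟫ ≤ ‖y - x‖ * ‖u‖ := real_inner_le_norm _ _
        _ = ‖x - y‖ := by rw [hu, mul_one, norm_sub_rev]
        _ ≤ 1 := hy x hx
    rw [inner_sub_left] at hyx
    show ⟪x, -u⟫ ≤ ⟪y - u, -u⟫
    rw [hyu, inner_neg_right]
    linarith
  rw [suppFn_eq_of_isMaxOn hy hmax, suppFn_eq_of_isMaxOn hyK hmaxK, hyu, sub_sub_cancel]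

end BallBody

/-- For a nonempty compact ball-body `K`, the Minkowski difference `K - K^c` is the closed
unit ball; equivalently `h_{K^c}(u) = 1 - h_K(-u)` for every unit vector `u`. -/
theorem stmt2 (n : ℕ) (hn : 1 ≤ n) (K : Set (EuclideanSpace ℝ (Fin n)))
    (hne : K.Nonempty) (hcomp : IsCompact K) (hbb : K = cDual (cDual K)) :
    K - cDual K = closedBall (0 : EuclideanSpace ℝ (Fin n)) 1 ∧
      ∀ u : EuclideanSpace ℝ (Fin n), ‖u‖ = 1 →
        suppFn (cDual K) u = 1 - suppFn K (-u) := by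
  have : Nonempty (Fin n) := ⟨⟨0, hn⟩⟩
  exact ⟨sub_cDual_eq_closedBall hne hcomp hbb, fun u hu => suppFn_cDual hne hcomp hbb hu⟩
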